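/- In the three-period panel setting, the sequential DID estimator τ̂_sDID equals the coefficient β̂ in the least-squares problem minimizing Σ_i Σ_{t=0}^{2} (Y_{it} − α_i − ξ_i·t − δ_t − β D_{it})² over unit intercepts α, unit-specific linear time trends ξ, time effects δ, and β, where D_{it} = [G i ∧ t = 2]. -/

import Mathlib

/-!
At a least-squares minimiser the residual `r` is orthogonal to every regressor. Orthogonality to
the unit dummy and to the unit trend forces `r i = (c, -2c, c)` for some `c` depending on the
unit, so the second difference `Y i 0 - 2 Y i 1 + Y i 2`, which annihilates `α i + ξ i t`,
equals `(δ 0 - 2 δ 1 + δ 2) + β [G i] + 6 r i 2`. Orthogonality to the period-2 time dummy and to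
`D` makes `r · 2` sum to zero within each group, so the group means of the second difference
differ by exactly `β`; that difference of means is `τ̂_sDID`.
-/

open Finset

theorem sum_mul_eq_zero_of_forall_sum_sq_le {κ : Type*} [Fintype κ] {r v : κ → ℝ}
    (h : ∀ s : ℝ, ∑ k, r k ^ 2 ≤ ∑ k, (r k - s * v k) ^ 2) :
    ∑ k, v k * r k = 0 := by
  have hquad : ∀ s : ℝ,
      0 ≤ (∑ k, v k ^ 2) * (s * s) + (-2 * ∑ k, v k * r k) * s + 0 := by
    intro s
    have hexpand : ∑ k, (r k - s * v k) ^ 2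
        = ∑ k, r k ^ 2 + ((∑ k, v k ^ 2) * (s * s) + (-2 * ∑ k, v k * r k) * s) := by
      simp only [sum_mul, mul_sum, ← sum_add_distrib]
      exact sum_congr rfl fun k _ => by ring
    linarith [h s]
  have hdiscrim := discrim_le_zero hquad
  rw [discrim] at hdiscrim
  have hsq : (∑ k, v k * r k) ^ 2 = 0 := by nlinarith [sq_nonneg (∑ k, v k * r k)]
  exact pow_eq_zero_iff two_ne_zero |>.mp hsq

namespace UnitTrendRegression

variable {ι τ : Type*} [Fintype ι] [Fintype τ]

def residual (time : τ → ℝ) (Y D : ι → τ → ℝ) (α ξ : ι → ℝ) (δ : τ → ℝ) (β : ℝ)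
    (i : ι) (t : τ) : ℝ :=
  Y i t - α i - ξ i * time t - δ t - β * D i t

def IsLeastSquaresFit (time : τ → ℝ) (Y D : ι → τ → ℝ) (α ξ : ι → ℝ) (δ : τ → ℝ) (β : ℝ) :
    Prop :=
  ∀ (α' ξ' : ι → ℝ) (δ' : τ → ℝ) (β' : ℝ),
    ∑ i, ∑ t, residual time Y D α ξ δ β i t ^ 2 ≤ ∑ i, ∑ t, residual time Y D α' ξ' δ' β' i t ^ 2

namespace IsLeastSquaresFit

variable {time : τ → ℝ} {Y D : ι → τ → ℝ} {α ξ : ι → ℝ} {δ : τ → ℝ} {β : ℝ}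

theorem sum_sum_regressor_mul_residual_eq_zero (h : IsLeastSquaresFit time Y D α ξ δ β)
    (a x : ι → ℝ) (d : τ → ℝ) (b : ℝ) :
    ∑ i, ∑ t, (a i + x i * time t + d t + b * D i t) * residual time Y D α ξ δ β i t = 0 := by
  rw [← Fintype.sum_prod_type']
  refine sum_mul_eq_zero_of_forall_sum_sq_le fun s => ?_
  have hs := h (fun i => α i + s * a i) (fun i => ξ i + s * x i) (fun t => δ t + s * d t)
    (β + s * b)
  simp only [← Fintype.sum_prod_type'] at hs
  convert hs using 3
  simp only [residual]
  ring

theorem sum_residual_eq_zero (h : IsLeastSquaresFit time Y D α ξ δ β) (j : ι) :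
    ∑ t, residual time Y D α ξ δ β j t = 0 := by
  classical
  simpa [Pi.single_apply] using h.sum_sum_regressor_mul_residual_eq_zero (Pi.single j 1) 0 0 0

theorem sum_time_mul_residual_eq_zero (h : IsLeastSquaresFit time Y D α ξ δ β) (j : ι) :
    ∑ t, time t * residual time Y D α ξ δ β j t = 0 := by
  classical
  simpa [Pi.single_apply] using h.sum_sum_regressor_mul_residual_eq_zero 0 (Pi.single j 1) 0 0

theorem sum_residual_apply_eq_zero (h : IsLeastSquaresFit time Y D α ξ δ β) (t₀ : τ) :
    ∑ i, residual time Y D α ξ δ β i t₀ = 0 := by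
  classical
  simpa [Pi.single_apply] using h.sum_sum_regressor_mul_residual_eq_zero 0 0 (Pi.single t₀ 1) 0

theorem sum_sum_mul_residual_eq_zero (h : IsLeastSquaresFit time Y D α ξ δ β) :
    ∑ i, ∑ t, D i t * residual time Y D α ξ δ β i t = 0 := by
  simpa using h.sum_sum_regressor_mul_residual_eq_zero 0 0 0 1

theorem sum_filter_residual_eq_zero [DecidableEq τ] (h : IsLeastSquaresFit time Y D α ξ δ β)
    {G : ι → Bool} {t₀ : τ} (hD : ∀ i t, D i t = if G i = true ∧ t = t₀ then 1 else 0)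
    (g : Bool) :
    ∑ i ∈ univ.filter (fun i => G i = g), residual time Y D α ξ δ β i t₀ = 0 := by
  have htreated : ∑ i ∈ univ.filter (fun i => G i = true), residual time Y D α ξ δ β i t₀ = 0 := by
    rw [sum_filter]
    refine (sum_congr rfl fun i _ => ?_).trans h.sum_sum_mul_residual_eq_zero
    by_cases hG : G i = true <;> simp [hD, hG]
  cases g
  · have hsplit := sum_filter_add_sum_filter_not univ (fun i => G i = true)
      (residual time Y D α ξ δ β · t₀)
    simp only [Bool.not_eq_true, htreated, zero_add] at hsplit
    rw [hsplit, h.sum_residual_apply_eq_zero]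
  · exact htreated

end IsLeastSquaresFit

variable {Y D : ι → Fin 3 → ℝ} {α ξ : ι → ℝ} {δ : Fin 3 → ℝ} {β : ℝ}

theorem IsLeastSquaresFit.second_diff_eq
    (h : IsLeastSquaresFit (fun t : Fin 3 => ((t : ℕ) : ℝ)) Y D α ξ δ β) (i : ι) :
    Y i 0 - 2 * Y i 1 + Y i 2 = (δ 0 - 2 * δ 1 + δ 2) + β * (D i 0 - 2 * D i 1 + D i 2)
      + 6 * residual (fun t : Fin 3 => ((t : ℕ) : ℝ)) Y D α ξ δ β i 2 := by
  have hlevel := h.sum_residual_eq_zero i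
  have htrend := h.sum_time_mul_residual_eq_zero i
  simp only [Fin.sum_univ_three, residual] at hlevel htrend ⊢
  norm_num at hlevel htrend ⊢
  linarith

theorem IsLeastSquaresFit.sum_second_diff_eq
    (h : IsLeastSquaresFit (fun t : Fin 3 => ((t : ℕ) : ℝ)) Y D α ξ δ β) {s : Finset ι} {c : ℝ}
    (hD : ∀ i ∈ s, D i 0 - 2 * D i 1 + D i 2 = c)
    (hr : ∑ i ∈ s, residual (fun t : Fin 3 => ((t : ℕ) : ℝ)) Y D α ξ δ β i 2 = 0) :
    ∑ i ∈ s, (Y i 2 - Y i 1) - ∑ i ∈ s, (Y i 1 - Y i 0) = #s * (δ 0 - 2 * δ 1 + δ 2 + β * c) := by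
  calc ∑ i ∈ s, (Y i 2 - Y i 1) - ∑ i ∈ s, (Y i 1 - Y i 0)
      = ∑ i ∈ s, ((δ 0 - 2 * δ 1 + δ 2 + β * c)
          + 6 * residual (fun t : Fin 3 => ((t : ℕ) : ℝ)) Y D α ξ δ β i 2) := by
        rw [← sum_sub_distrib]
        refine sum_congr rfl fun i hi => ?_
        rw [← hD i hi]
        linarith [h.second_diff_eq i]
    _ = #s * (δ 0 - 2 * δ 1 + δ 2 + β * c) := by
        rw [sum_add_distrib, ← mul_sum, hr, sum_const, nsmul_eq_mul, mul_zero, add_zero]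

end UnitTrendRegression

open UnitTrendRegression in
/-- The sequential DID estimator equals the coefficient β̂ in the
two-way fixed effects regression with unit-specific linear time trends. -/
theorem sequential_did_eq_unit_time_trend_regression
    (n : ℕ) (Y : Fin n → Fin 3 → ℝ) (G : Fin n → Bool)
    (n1 n0 : ℕ)
    (hn1 : n1 = (univ.filter (fun i => G i = true)).card)
    (hn0 : n0 = (univ.filter (fun i => G i = false)).card)
    (hn1pos : 0 < n1) (hn0pos : 0 < n0)
    (D : Fin n → Fin 3 → ℝ)
    (hD : ∀ i t, D i t = if G i = true ∧ t = 2 then (1:ℝ) else 0)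
    (α ξ : Fin n → ℝ) (δ : Fin 3 → ℝ) (β : ℝ)
    (hmin : ∀ (α' ξ' : Fin n → ℝ) (δ' : Fin 3 → ℝ) (β' : ℝ),
      ∑ i, ∑ t, (Y i t - α i - ξ i * ((t : ℕ) : ℝ) - δ t - β * D i t)^2
      ≤ ∑ i, ∑ t, (Y i t - α' i - ξ' i * ((t : ℕ) : ℝ) - δ' t - β' * D i t)^2) :
    ((1 / (n1:ℝ)) * ∑ i ∈ univ.filter (fun i => G i = true), (Y i 2 - Y i 1)
      - (1 / (n0:ℝ)) * ∑ i ∈ univ.filter (fun i => G i = false), (Y i 2 - Y i 1))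
    - ((1 / (n1:ℝ)) * ∑ i ∈ univ.filter (fun i => G i = true), (Y i 1 - Y i 0)
      - (1 / (n0:ℝ)) * ∑ i ∈ univ.filter (fun i => G i = false), (Y i 1 - Y i 0))
    = β := by
  have h : IsLeastSquaresFit (fun t : Fin 3 => ((t : ℕ) : ℝ)) Y D α ξ δ β := hmin
  have htreated := h.sum_second_diff_eq (c := 1) (fun i hi => by simp [hD, (mem_filter.1 hi).2])
    (h.sum_filter_residual_eq_zero hD true)
  have hcontrol := h.sum_second_diff_eq (c := 0) (fun i hi => by simp [hD, (mem_filter.1 hi).2])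
    (h.sum_filter_residual_eq_zero hD false)
  rw [← hn1] at htreated
  rw [← hn0] at hcontrol
  have hn1ne : (n1 : ℝ) ≠ 0 := by positivity
  have hn0ne : (n0 : ℝ) ≠ 0 := by positivity
  linear_combination (norm := skip) (1 / (n1 : ℝ)) * htreated - (1 / (n0 : ℝ)) * hcontrol
  field_simp
  ring
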